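/- Let A (n×n), B (n×q), P (k×n), P̄ (l×n), P† (n×k), P̄† (n×l) be real matrices with P†·P + P̄†·P̄ = I_n. Over the field F = RatFunc ℝ define X(s) := P̂ − Res(P·A·P†)·(P·A·P̄†·P̄)^, where M̂ denotes entrywise application of the algebra map ℝ → F and Res(M) := (s•1 − M̂)⁻¹. Then X(s)·Res(A)·B̂ = Res(P·A·P†)·(P·B)^, i.e., the composition of the output rectifier with the transfer matrix G_yu(s) = (sI − A)⁻¹B equals the reduced transfer matrix Ĝ_{ξu}(s) = (sI − PAP†)⁻¹ PB. -/
import Mathlib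


open Matrix

set_option synthInstance.maxHeartbeats 1000000

/-- Entrywise application of the algebra map `ℝ → RatFunc ℝ` to a real matrix. -/
noncomputable def rmap {k n : ℕ} (M : Matrix (Fin k) (Fin n) ℝ) :
    Matrix (Fin k) (Fin n) (RatFunc ℝ) :=
  M.map (algebraMap ℝ (RatFunc ℝ))

/-- The resolvent `(s • 1 - M)⁻¹` of a square real matrix, over the field `RatFunc ℝ`. -/
noncomputable def Res {n : ℕ} (M : Matrix (Fin n) (Fin n) ℝ) :
    Matrix (Fin n) (Fin n) (RatFunc ℝ) :=
  ((RatFunc.X : RatFunc ℝ) • (1 : Matrix (Fin n) (Fin n) (RatFunc ℝ)) - rmap M)⁻¹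

lemma rmap_mul {k m n : ℕ} (M : Matrix (Fin k) (Fin m) ℝ) (N : Matrix (Fin m) (Fin n) ℝ) :
    rmap (M * N) = rmap M * rmap N := by
  simp [rmap, Matrix.map_mul]

lemma rmap_add {k n : ℕ} (M N : Matrix (Fin k) (Fin n) ℝ) :
    rmap (M + N) = rmap M + rmap N := by
  simp [rmap, Matrix.map_add]

lemma res_eq {n : ℕ} (M : Matrix (Fin n) (Fin n) ℝ) :
    (RatFunc.X : RatFunc ℝ) • (1 : Matrix (Fin n) (Fin n) (RatFunc ℝ)) - rmap M
      = (charmatrix M).map (algebraMap (Polynomial ℝ) (RatFunc ℝ)) := by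
  ext i j
  simp only [Matrix.sub_apply, Matrix.smul_apply, Matrix.map_apply, rmap,
    charmatrix_apply, map_sub, smul_eq_mul]
  by_cases h : i = j <;>
    simp [h, Matrix.one_apply, Matrix.diagonal_apply, RatFunc.algebraMap_X,
      IsScalarTower.algebraMap_apply ℝ (Polynomial ℝ) (RatFunc ℝ), Polynomial.algebraMap_eq]

lemma res_unit {n : ℕ} (M : Matrix (Fin n) (Fin n) ℝ) :
    IsUnit ((RatFunc.X : RatFunc ℝ) • (1 : Matrix (Fin n) (Fin n) (RatFunc ℝ)) - rmap M).det := by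
  rw [res_eq, ← RingHom.mapMatrix_apply, ← RingHom.map_det]
  refine isUnit_iff_ne_zero.2 fun h => M.charpoly_monic.ne_zero ?_
  exact IsFractionRing.injective (Polynomial ℝ) (RatFunc ℝ)
    (by simpa [Matrix.charpoly] using h)

/-- The composition of the output rectifier `X(s)` with `G_yu(s) = (sI - A)⁻¹ B` equals the
reduced transfer matrix `Ĝ_{ξu}(s) = (sI - PAP†)⁻¹ P B`. -/
theorem stmt_17 (n q k l : ℕ)
    (A : Matrix (Fin n) (Fin n) ℝ) (B : Matrix (Fin n) (Fin q) ℝ)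
    (P : Matrix (Fin k) (Fin n) ℝ) (Pbar : Matrix (Fin l) (Fin n) ℝ)
    (Pdag : Matrix (Fin n) (Fin k) ℝ) (Pbardag : Matrix (Fin n) (Fin l) ℝ)
    (hcomp : Pdag * P + Pbardag * Pbar = 1) :
    (rmap P - Res (P * A * Pdag) * rmap (P * A * Pbardag * Pbar))
        * Res A * rmap B = Res (P * A * Pdag) * rmap (P * B) := by
  set Z := (RatFunc.X : RatFunc ℝ) • (1 : Matrix (Fin n) (Fin n) (RatFunc ℝ)) - rmap A with hZ
  set W := (RatFunc.X : RatFunc ℝ) • (1 : Matrix (Fin k) (Fin k) (RatFunc ℝ))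
      - rmap (P * A * Pdag) with hW
  have hZu := res_unit A
  have hWu := res_unit (P * A * Pdag)
  have hsum : P * A * Pdag * P + P * A * Pbardag * Pbar = P * A := by
    rw [Matrix.mul_assoc (P * A) Pdag P, Matrix.mul_assoc (P * A) Pbardag Pbar,
      ← Matrix.mul_add, hcomp, Matrix.mul_one]
  have key : W * rmap P - rmap (P * A * Pbardag * Pbar) = rmap P * Z := by
    rw [hW, hZ, Matrix.sub_mul, Matrix.mul_sub, Matrix.smul_mul, Matrix.one_mul,
      Matrix.mul_smul, Matrix.mul_one, sub_sub, ← rmap_mul, ← rmap_add, hsum, rmap_mul]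
  have hXZ : rmap P - W⁻¹ * rmap (P * A * Pbardag * Pbar) = W⁻¹ * rmap P * Z := by
    rw [Matrix.mul_assoc W⁻¹ (rmap P) Z, ← key, Matrix.mul_sub, ← Matrix.mul_assoc,
      Matrix.nonsing_inv_mul _ hWu, Matrix.one_mul]
  show (rmap P - W⁻¹ * rmap (P * A * Pbardag * Pbar)) * Z⁻¹ * rmap B
      = W⁻¹ * rmap (P * B)
  rw [hXZ, Matrix.mul_assoc (W⁻¹ * rmap P) Z Z⁻¹, Matrix.mul_nonsing_inv _ hZu,
    Matrix.mul_one, Matrix.mul_assoc, ← rmap_mul]
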